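/- For every nonzero polynomial q of degree at most m, the ratio E_{X∼N(0,1)}[X² q(X)²] / E_{X∼N(0,1)}[q(X)²] is at most C·m for some absolute constant C > 0. -/

import Mathlib

open MeasureTheory ProbabilityTheory Polynomial Real Filter Finset
open scoped ENNReal NNReal Topology

lemma aux_tendsto_pow (n : ℕ) {b : ℝ} (hb : 0 < b) :
    Tendsto (fun x : ℝ => x ^ n * rexp (-b * x ^ 2)) (cocompact ℝ) (𝓝 0) := by
  have h := tendsto_rpow_abs_mul_exp_neg_mul_sq_cocompact hb (n : ℝ)
  refine squeeze_zero_norm (fun x => ?_) h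
  rw [Real.norm_eq_abs, abs_mul, abs_pow, Real.abs_exp, ← Real.rpow_natCast |x| n]

lemma aux_tendsto_poly (p : ℝ[X]) {b : ℝ} (hb : 0 < b) :
    Tendsto (fun x => p.eval x * rexp (-b * x ^ 2)) (cocompact ℝ) (𝓝 0) := by
  have : (fun x => p.eval x * rexp (-b * x ^ 2))
      = fun x => ∑ i ∈ Finset.range (p.natDegree + 1),
          p.coeff i * (x ^ i * rexp (-b * x ^ 2)) := by
    funext x
    rw [Polynomial.eval_eq_sum_range, Finset.sum_mul]
    exact Finset.sum_congr rfl fun i _ => by ring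
  rw [this]
  have h0 : (0 : ℝ) = ∑ i ∈ Finset.range (p.natDegree + 1), (0:ℝ) := by simp
  rw [h0]
  exact tendsto_finset_sum _ fun i _ => by
    simpa using (aux_tendsto_pow i hb).const_mul (p.coeff i)

lemma aux_tendsto_poly' (p : ℝ[X]) :
    Tendsto (fun x => p.eval x * rexp (-x ^ 2 / 2)) (cocompact ℝ) (𝓝 0) := by
  have h := aux_tendsto_poly p (by norm_num : (0:ℝ) < 1/2)
  convert h using 2 with x
  congr 1
  ring

lemma aux_bounded {f : ℝ → ℝ} (hc : Continuous f) (h0 : Tendsto f (cocompact ℝ) (𝓝 0)) :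
    ∃ M : ℝ, ∀ x, |f x| ≤ M := by
  have h1 : {x : ℝ | dist (f x) 0 < 1} ∈ cocompact ℝ :=
    Metric.tendsto_nhds.mp h0 1 one_pos
  obtain ⟨K, hK, hsub⟩ := Filter.mem_cocompact.mp h1
  obtain ⟨C, hC⟩ := hK.exists_bound_of_continuousOn hc.continuousOn
  refine ⟨max C 1, fun x => ?_⟩
  by_cases hx : x ∈ K
  · exact le_trans (by simpa [Real.norm_eq_abs] using hC x hx) (le_max_left _ _)
  · have := hsub hx
    simp only [Set.mem_setOf_eq, dist_zero_right, Real.norm_eq_abs] at this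
    exact le_trans this.le (le_max_right _ _)

lemma aux_integrable (p : ℝ[X]) : Integrable (fun x => p.eval x * rexp (-x ^ 2 / 2)) := by
  obtain ⟨M, hM⟩ := aux_bounded
    ((Polynomial.continuous p).mul (Real.continuous_exp.comp (by continuity)))
    (aux_tendsto_poly p (by norm_num : (0:ℝ) < 1/4))
  refine Integrable.mono' ((integrable_exp_neg_mul_sq (by norm_num : (0:ℝ) < 1/4)).const_mul M)
    ?_ ?_
  · exact ((Polynomial.continuous p).mul
      (Real.continuous_exp.comp (by continuity))).aestronglyMeasurable
  · filter_upwards with x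
    have hsplit : rexp (-x ^ 2 / 2) = rexp (-(1/4:ℝ) * x ^ 2) * rexp (-(1/4:ℝ) * x ^ 2) := by
      rw [← Real.exp_add]; ring_nf
    rw [Real.norm_eq_abs, hsplit, ← mul_assoc, abs_mul]
    rw [Real.abs_exp]
    exact mul_le_mul_of_nonneg_right (by simpa [abs_mul, Real.abs_exp] using hM x)
      (Real.exp_nonneg _)

noncomputable def Jg (p : ℝ[X]) : ℝ := ∫ x, p.eval x * rexp (-x ^ 2 / 2)

lemma Jg_add (p q : ℝ[X]) : Jg (p + q) = Jg p + Jg q := by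
  unfold Jg
  simp_rw [Polynomial.eval_add, add_mul]
  exact integral_add (aux_integrable p) (aux_integrable q)

lemma Jg_sub (p q : ℝ[X]) : Jg (p - q) = Jg p - Jg q := by
  unfold Jg
  simp_rw [Polynomial.eval_sub, sub_mul]
  exact integral_sub (aux_integrable p) (aux_integrable q)

lemma Jg_smul (a : ℝ) (p : ℝ[X]) : Jg (C a * p) = a * Jg p := by
  unfold Jg
  simp_rw [Polynomial.eval_mul, Polynomial.eval_C, mul_assoc]
  exact integral_const_mul a _

lemma Jg_zero : Jg 0 = 0 := by simp [Jg]

lemma Jg_sum {ι : Type*} (s : Finset ι) (f : ι → ℝ[X]) :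
    Jg (∑ i ∈ s, f i) = ∑ i ∈ s, Jg (f i) := by
  classical
  induction s using Finset.induction_on with
  | empty => simp [Jg_zero]
  | insert _ _ h ih => rw [Finset.sum_insert h, Jg_add, ih, Finset.sum_insert h]

lemma Jg_ibp (p : ℝ[X]) : Jg (X * p) = Jg (derivative p) := by
  have key : ∫ x, ((derivative p - X * p : ℝ[X]).eval x * rexp (-x ^ 2 / 2)) = 0 - 0 := by
    apply integral_of_hasDerivAt_of_tendsto
      (f := fun x => p.eval x * rexp (-x ^ 2 / 2))
    · intro x
      have h1 : HasDerivAt (fun y : ℝ => -y ^ 2 / 2) (-x) x := by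
        have := (hasDerivAt_pow 2 x).neg.div_const 2
        refine this.congr_deriv ?_
        push_cast
        ring
      have h2 := h1.exp
      have h3 := (p.hasDerivAt x).mul h2
      refine h3.congr_deriv ?_
      simp only [Polynomial.eval_sub, Polynomial.eval_mul, Polynomial.eval_X]
      ring
    · exact aux_integrable _
    · exact (aux_tendsto_poly' p).mono_left
        (by rw [cocompact_eq_atBot_atTop]; exact le_sup_left)
    · exact (aux_tendsto_poly' p).mono_left
        (by rw [cocompact_eq_atBot_atTop]; exact le_sup_right)
  have hsplit : (fun x => ((derivative p - X * p : ℝ[X]).eval x * rexp (-x ^ 2 / 2)))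
      = fun x => (derivative p).eval x * rexp (-x ^ 2 / 2)
          - (X * p : ℝ[X]).eval x * rexp (-x ^ 2 / 2) := by
    funext x; rw [Polynomial.eval_sub, sub_mul]
  rw [hsplit, integral_sub (aux_integrable _) (aux_integrable _)] at key
  have : Jg (derivative p) - Jg (X * p) = 0 := by simpa [Jg] using key
  linarith

noncomputable def Hr (n : ℕ) : ℝ[X] := (Polynomial.hermite n).map (Int.castRingHom ℝ)

lemma Hr_zero : Hr 0 = 1 := by simp [Hr, Polynomial.hermite_zero]

lemma Hr_succ (n : ℕ) : Hr (n + 1) = X * Hr n - derivative (Hr n) := by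
  unfold Hr
  rw [Polynomial.hermite_succ, Polynomial.map_sub, Polynomial.map_mul, Polynomial.map_X,
    derivative_map]

lemma Hr_monic (n : ℕ) : (Hr n).Monic := (Polynomial.hermite_monic n).map _

lemma Hr_natDegree (n : ℕ) : (Hr n).natDegree = n := by
  rw [Hr, (Polynomial.hermite_monic n).natDegree_map, Polynomial.natDegree_hermite]

lemma Hr_deriv_succ (n : ℕ) : derivative (Hr (n + 1)) = C ((n : ℝ) + 1) * Hr n := by
  induction n with
  | zero =>
    rw [show Hr 1 = X by simp [Hr, Polynomial.hermite_one]]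
    simp [Hr_zero]
  | succ n ih =>
    have hd : derivative (Hr n) = X * Hr n - Hr (n + 1) := by rw [Hr_succ]; ring
    rw [Hr_succ (n + 1), derivative_sub, derivative_mul, derivative_X, one_mul, ih,
      derivative_mul, derivative_C, zero_mul, zero_add, hd]
    push_cast
    simp only [map_add, map_one]
    ring

lemma Hr_deriv (n : ℕ) : derivative (Hr n) = C (n : ℝ) * Hr (n - 1) := by
  cases n with
  | zero => simp [Hr_zero]
  | succ n => simpa using Hr_deriv_succ n

lemma Hr_X_mul (n : ℕ) : X * Hr n = Hr (n + 1) + C (n : ℝ) * Hr (n - 1) := by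
  rw [Hr_succ, Hr_deriv]; ring

lemma Hr_iterate (n : ℕ) : derivative^[n] (Hr n) = C ((Nat.factorial n : ℕ) : ℝ) := by
  induction n with
  | zero => simp [Hr_zero]
  | succ n ih =>
    rw [Function.iterate_succ_apply, Hr_deriv_succ, Polynomial.iterate_derivative_C_mul, ih,
      ← map_mul]
    congr 1
    push_cast [Nat.factorial_succ]
    ring

lemma Jg_step (n : ℕ) (p : ℝ[X]) : Jg (Hr (n + 1) * p) = Jg (Hr n * derivative p) := by
  have e1 : Hr (n + 1) * p = X * (Hr n * p) - derivative (Hr n) * p := by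
    rw [Hr_succ]; ring
  rw [e1, Jg_sub, Jg_ibp, derivative_mul, Jg_add]
  ring

lemma Jg_rep (n : ℕ) : ∀ p : ℝ[X], Jg (Hr n * p) = Jg (derivative^[n] p) := by
  induction n with
  | zero => intro p; simp [Hr_zero]
  | succ n ih => intro p; rw [Jg_step, ih, Function.iterate_succ_apply]

lemma Jg_orth {i j : ℕ} (hij : i ≠ j) : Jg (Hr i * Hr j) = 0 := by
  rcases Nat.lt_or_ge i j with h | h
  · rw [mul_comm, Jg_rep, Polynomial.iterate_derivative_eq_zero (by rw [Hr_natDegree]; exact h),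
      Jg_zero]
  · have h' : j < i := lt_of_le_of_ne h (Ne.symm hij)
    rw [Jg_rep, Polynomial.iterate_derivative_eq_zero (by rw [Hr_natDegree]; exact h'), Jg_zero]

lemma Jg_self (n : ℕ) : Jg (Hr n * Hr n) = ((Nat.factorial n : ℕ) : ℝ) * Jg 1 := by
  rw [Jg_rep, Hr_iterate, show (C ((Nat.factorial n : ℕ) : ℝ)) =
    C ((Nat.factorial n : ℕ) : ℝ) * 1 by ring, Jg_smul]

lemma Jg_sq (M : ℕ) (a : ℕ → ℝ) :
    Jg ((∑ n ∈ Finset.range M, C (a n) * Hr n) ^ 2)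
      = (∑ n ∈ Finset.range M, (a n) ^ 2 * ((Nat.factorial n : ℕ) : ℝ)) * Jg 1 := by
  rw [sq, Finset.sum_mul_sum, Jg_sum]
  have step1 : ∀ i ∈ Finset.range M,
      Jg (∑ j ∈ Finset.range M, (C (a i) * Hr i) * (C (a j) * Hr j))
        = (a i) ^ 2 * ((Nat.factorial i : ℕ) : ℝ) * Jg 1 := by
    intro i hi
    rw [Jg_sum]
    rw [Finset.sum_eq_single i]
    · have : (C (a i) * Hr i) * (C (a i) * Hr i) = C (a i * a i) * (Hr i * Hr i) := by
        rw [map_mul]; ring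
      rw [this, Jg_smul, Jg_self]; ring
    · intro j _ hj
      have : (C (a i) * Hr i) * (C (a j) * Hr j) = C (a i * a j) * (Hr i * Hr j) := by
        rw [map_mul]; ring
      rw [this, Jg_smul, Jg_orth (fun h => hj (h.symm)), mul_zero]
    · intro h; exact absurd hi h
  rw [Finset.sum_congr rfl step1, Finset.sum_mul]

lemma Hr_rep : ∀ (m : ℕ) (q : ℝ[X]), q.natDegree ≤ m →
    ∃ a : ℕ → ℝ, (∀ n, m < n → a n = 0) ∧
      q = ∑ n ∈ Finset.range (m + 1), C (a n) * Hr n := by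
  intro m
  induction m with
  | zero =>
    intro q hq
    refine ⟨fun n => if n = 0 then q.coeff 0 else 0, fun n hn => if_neg (by omega), ?_⟩
    rw [Finset.sum_range_one]
    simp [Hr_zero]
    exact Polynomial.eq_C_of_natDegree_le_zero hq
  | succ m ih =>
    intro q hq
    set c := q.coeff (m + 1) with hc
    have hr : (q - C c * Hr (m + 1)).natDegree ≤ m := by
      rw [Polynomial.natDegree_le_iff_coeff_eq_zero]
      intro N hN
      rw [Polynomial.coeff_sub, Polynomial.coeff_C_mul]
      rcases eq_or_lt_of_le (Nat.succ_le_of_lt hN) with h | h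
      · rw [← h]
        have : (Hr (m + 1)).coeff (m + 1) = 1 := by
          have := (Hr_monic (m + 1)).coeff_natDegree
          rwa [Hr_natDegree] at this
        rw [this, mul_one, ← hc, sub_self]
      · have h1 : q.coeff N = 0 :=
          Polynomial.coeff_eq_zero_of_natDegree_lt (lt_of_le_of_lt hq h)
        have h2 : (Hr (m + 1)).coeff N = 0 :=
          Polynomial.coeff_eq_zero_of_natDegree_lt (by rw [Hr_natDegree]; exact h)
        rw [h1, h2, mul_zero, sub_zero]
    obtain ⟨a', ha'0, ha'⟩ := ih _ hr
    refine ⟨fun n => if n = m + 1 then c else a' n, ?_, ?_⟩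
    · intro n hn
      have h1 : n ≠ m + 1 := by omega
      simp only [h1, if_false]
      exact ha'0 n (by omega)
    · rw [Finset.sum_range_succ]
      have e1 : ∑ n ∈ Finset.range (m + 1), C (if n = m + 1 then c else a' n) * Hr n
          = ∑ n ∈ Finset.range (m + 1), C (a' n) * Hr n := by
        refine Finset.sum_congr rfl fun n hn => ?_
        have : n ≠ m + 1 := by have := Finset.mem_range.mp hn; omega
        simp [this]
      have e2 : (fun n => if n = m + 1 then c else a' n) (m + 1) = c := by simp
      rw [e1, ← ha', e2]
      ring

lemma Hr_X_mul_sum (M : ℕ) (a : ℕ → ℝ) (hZ : ∀ n, M ≤ n → a n = 0) :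
    X * (∑ n ∈ Finset.range M, C (a n) * Hr n)
      = ∑ k ∈ Finset.range (M + 1),
          C ((if k = 0 then 0 else a (k - 1)) + ((k : ℝ) + 1) * a (k + 1)) * Hr k := by
  rw [Finset.mul_sum]
  have lhs_eq : ∀ n ∈ Finset.range M,
      X * (C (a n) * Hr n) = C (a n) * Hr (n + 1) + C ((n : ℝ) * a n) * Hr (n - 1) := by
    intro n _
    have : X * (C (a n) * Hr n) = C (a n) * (X * Hr n) := by ring
    rw [this, Hr_X_mul, map_mul]
    ring
  rw [Finset.sum_congr rfl lhs_eq, Finset.sum_add_distrib]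
  have rhs_eq : ∀ k ∈ Finset.range (M + 1),
      C ((if k = 0 then 0 else a (k - 1)) + ((k : ℝ) + 1) * a (k + 1)) * Hr k
        = C (if k = 0 then 0 else a (k - 1)) * Hr k + C (((k : ℝ) + 1) * a (k + 1)) * Hr k := by
    intro k _; rw [map_add]; ring
  rw [Finset.sum_congr rfl rhs_eq, Finset.sum_add_distrib]
  congr 1
  · -- S1
    rw [Finset.sum_range_succ']
    simp
  · -- S2
    have e3 := Finset.sum_range_succ' (fun k : ℕ => C ((k : ℝ) * a k) * Hr (k - 1)) (M + 1)
    simp only [Nat.cast_zero, zero_mul, map_zero, add_zero] at e3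
    have e4 : ∑ n ∈ Finset.range (M + 2), C ((n : ℝ) * a n) * Hr (n - 1)
        = ∑ n ∈ Finset.range M, C ((n : ℝ) * a n) * Hr (n - 1) := by
      rw [Finset.sum_range_succ, Finset.sum_range_succ, hZ M le_rfl, hZ (M + 1) (by omega)]
      simp
    calc ∑ n ∈ Finset.range M, C ((n : ℝ) * a n) * Hr (n - 1)
        = ∑ n ∈ Finset.range (M + 1 + 1), C ((n : ℝ) * a n) * Hr (n - 1) := e4.symm
      _ = ∑ k ∈ Finset.range (M + 1), C (((k + 1 : ℕ) : ℝ) * a (k + 1)) * Hr (k + 1 - 1) := e3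
      _ = ∑ k ∈ Finset.range (M + 1), C (((k : ℝ) + 1) * a (k + 1)) * Hr k := by
          refine Finset.sum_congr rfl fun k _ => ?_
          push_cast
          simp

lemma sum_bound (m : ℕ) (hm : 0 < m) (a : ℕ → ℝ) (hZ : ∀ n, m < n → a n = 0) :
    ∑ k ∈ Finset.range (m + 2),
        ((if k = 0 then 0 else a (k - 1)) + ((k : ℝ) + 1) * a (k + 1)) ^ 2
          * ((Nat.factorial k : ℕ) : ℝ)
      ≤ 6 * m * ∑ n ∈ Finset.range (m + 1), (a n) ^ 2 * ((Nat.factorial n : ℕ) : ℝ) := by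
  set D := ∑ n ∈ Finset.range (m + 1), (a n) ^ 2 * ((Nat.factorial n : ℕ) : ℝ) with hD
  have hDnn : 0 ≤ D := Finset.sum_nonneg fun n _ => by positivity
  have h1 : ∑ k ∈ Finset.range (m + 2),
      ((if k = 0 then 0 else a (k - 1)) + ((k : ℝ) + 1) * a (k + 1)) ^ 2
        * ((Nat.factorial k : ℕ) : ℝ)
      ≤ ∑ k ∈ Finset.range (m + 2),
        (2 * (if k = 0 then 0 else a (k - 1)) ^ 2 + 2 * (((k : ℝ) + 1) * a (k + 1)) ^ 2)
          * ((Nat.factorial k : ℕ) : ℝ) := by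
    refine Finset.sum_le_sum fun k _ => mul_le_mul_of_nonneg_right ?_ (by positivity)
    nlinarith [sq_nonneg ((if k = 0 then 0 else a (k - 1)) - ((k : ℝ) + 1) * a (k + 1))]
  refine le_trans h1 ?_
  have hsplit : ∑ k ∈ Finset.range (m + 2),
      (2 * (if k = 0 then 0 else a (k - 1)) ^ 2 + 2 * (((k : ℝ) + 1) * a (k + 1)) ^ 2)
        * ((Nat.factorial k : ℕ) : ℝ)
      = ∑ k ∈ Finset.range (m + 2),
          2 * (if k = 0 then 0 else a (k - 1)) ^ 2 * ((Nat.factorial k : ℕ) : ℝ)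
        + ∑ k ∈ Finset.range (m + 2),
          2 * (((k : ℝ) + 1) * a (k + 1)) ^ 2 * ((Nat.factorial k : ℕ) : ℝ) := by
    rw [← Finset.sum_add_distrib]
    exact Finset.sum_congr rfl fun k _ => by ring
  rw [hsplit]
  -- part A
  have hA : ∑ k ∈ Finset.range (m + 2),
      2 * (if k = 0 then 0 else a (k - 1)) ^ 2 * ((Nat.factorial k : ℕ) : ℝ)
      ≤ 2 * (m + 1) * D := by
    rw [Finset.sum_range_succ' (fun k : ℕ =>
      2 * (if k = 0 then 0 else a (k - 1)) ^ 2 * ((Nat.factorial k : ℕ) : ℝ)) (m + 1)]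
    simp only [if_pos rfl, if_neg (Nat.succ_ne_zero _), Nat.add_sub_cancel]
    norm_num
    calc ∑ n ∈ Finset.range (m + 1), 2 * a n ^ 2 * ((Nat.factorial (n + 1) : ℕ) : ℝ)
        ≤ ∑ n ∈ Finset.range (m + 1), 2 * (m + 1) * (a n ^ 2 * ((Nat.factorial n : ℕ) : ℝ)) := by
          refine Finset.sum_le_sum fun n hn => ?_
          have hn' : n + 1 ≤ m + 1 := Finset.mem_range.mp hn
          have : ((Nat.factorial (n + 1) : ℕ) : ℝ)
              = ((n : ℝ) + 1) * ((Nat.factorial n : ℕ) : ℝ) := by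
            rw [Nat.factorial_succ]; push_cast; ring
          rw [this]
          have hle : ((n : ℝ) + 1) ≤ (m : ℝ) + 1 := by
            have h := Nat.lt_succ_iff.mp (Finset.mem_range.mp hn)
            have h2 : (n : ℝ) ≤ (m : ℝ) := by exact_mod_cast h
            linarith
          nlinarith [mul_nonneg (sq_nonneg (a n)) (Nat.cast_nonneg (Nat.factorial n) (α := ℝ)),
            hle]
      _ = 2 * ((m : ℝ) + 1) * D := by rw [hD, ← Finset.mul_sum]
  -- part B
  have hB : ∑ k ∈ Finset.range (m + 2),
      2 * (((k : ℝ) + 1) * a (k + 1)) ^ 2 * ((Nat.factorial k : ℕ) : ℝ)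
      ≤ 2 * m * D := by
    have hterm : ∀ k : ℕ, 2 * (((k : ℝ) + 1) * a (k + 1)) ^ 2 * ((Nat.factorial k : ℕ) : ℝ)
        = (fun n : ℕ => 2 * (n : ℝ) * a n ^ 2 * ((Nat.factorial n : ℕ) : ℝ)) (k + 1) := by
      intro k
      simp only [Nat.factorial_succ]
      push_cast
      ring
    rw [Finset.sum_congr rfl fun k _ => hterm k]
    have e3 := Finset.sum_range_succ' (fun n : ℕ =>
      2 * (n : ℝ) * a n ^ 2 * ((Nat.factorial n : ℕ) : ℝ)) (m + 2)
    simp only [Nat.cast_zero, mul_zero, zero_mul, add_zero] at e3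
    rw [← e3]
    have e4 : ∑ n ∈ Finset.range (m + 2 + 1),
        2 * (n : ℝ) * a n ^ 2 * ((Nat.factorial n : ℕ) : ℝ)
        = ∑ n ∈ Finset.range (m + 1), 2 * (n : ℝ) * a n ^ 2 * ((Nat.factorial n : ℕ) : ℝ) := by
      rw [Finset.sum_range_succ, Finset.sum_range_succ, hZ (m + 1) (by omega),
        hZ (m + 2) (by omega)]
      norm_num
    rw [e4]
    calc ∑ n ∈ Finset.range (m + 1), 2 * (n : ℝ) * a n ^ 2 * ((Nat.factorial n : ℕ) : ℝ)
        ≤ ∑ n ∈ Finset.range (m + 1), 2 * m * (a n ^ 2 * ((Nat.factorial n : ℕ) : ℝ)) := by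
          refine Finset.sum_le_sum fun n hn => ?_
          have hle : (n : ℝ) ≤ (m : ℝ) := by
            have := Finset.mem_range.mp hn
            exact_mod_cast Nat.le_of_lt_succ this
          nlinarith [mul_nonneg (sq_nonneg (a n)) (Nat.cast_nonneg (Nat.factorial n) (α := ℝ)),
            hle, Nat.cast_nonneg n (α := ℝ)]
      _ = 2 * (m : ℝ) * D := by rw [hD, ← Finset.mul_sum]
  have hm' : (1 : ℝ) ≤ m := by exact_mod_cast hm
  nlinarith [hA, hB, hDnn, hm']

lemma integral_sgauss (f : ℝ → ℝ) :
    ∫ x, f x ∂(gaussianReal 0 1) = ∫ x, gaussianPDFReal 0 1 x * f x := by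
  rw [gaussianReal_of_var_ne_zero 0 one_ne_zero]
  have : gaussianPDF 0 1 = fun x => ((Real.toNNReal (gaussianPDFReal 0 1 x) : ℝ≥0) : ℝ≥0∞) := by
    ext x; simp [gaussianPDF, ENNReal.ofReal]
  rw [this, integral_withDensity_eq_integral_smul
    ((measurable_gaussianPDFReal 0 1).real_toNNReal)]
  congr 1; ext x
  simp [NNReal.smul_def, Real.coe_toNNReal _ (gaussianPDFReal_nonneg 0 1 x)]

lemma pdf01 (x : ℝ) : gaussianPDFReal 0 1 x = (√(2 * π))⁻¹ * rexp (-x ^ 2 / 2) := by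
  simp [gaussianPDFReal]

lemma Jg_one_pos : 0 < Jg 1 := by
  have e : Jg 1 = ∫ x, rexp (-(1/2 : ℝ) * x ^ 2) := by
    unfold Jg
    congr 1; funext x
    rw [Polynomial.eval_one, one_mul]
    congr 1; ring
  rw [e, integral_gaussian]
  exact Real.sqrt_pos.mpr (by positivity)

theorem stmt5 : ∃ C > (0:ℝ), ∀ m : ℕ, 0 < m → ∀ q : Polynomial ℝ, q ≠ 0 →
    q.natDegree ≤ m →
    (∫ x, x^2 * (q.eval x)^2 ∂(gaussianReal 0 1)) /
      (∫ x, (q.eval x)^2 ∂(gaussianReal 0 1)) ≤ C * m := by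
  refine ⟨6, by norm_num, fun m hm q hq hdeg => ?_⟩
  obtain ⟨a, ha0, hrep⟩ := Hr_rep m q hdeg
  set c : ℝ := (√(2 * π))⁻¹ with hcdef
  have hc : 0 < c := by rw [hcdef]; positivity
  set J1 := Jg 1 with hJ1def
  have hJ1 : 0 < J1 := Jg_one_pos
  set D := ∑ n ∈ Finset.range (m + 1), (a n) ^ 2 * ((Nat.factorial n : ℕ) : ℝ) with hDdef
  set N := ∑ k ∈ Finset.range (m + 2),
      ((if k = 0 then 0 else a (k - 1)) + ((k : ℝ) + 1) * a (k + 1)) ^ 2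
        * ((Nat.factorial k : ℕ) : ℝ) with hNdef
  -- denominator
  have hden : ∫ x, (q.eval x)^2 ∂(gaussianReal 0 1) = c * (D * J1) := by
    rw [integral_sgauss]
    have e : ∀ x, gaussianPDFReal 0 1 x * (q.eval x)^2
        = c * ((q ^ 2 : ℝ[X]).eval x * rexp (-x ^ 2 / 2)) := by
      intro x
      rw [pdf01, Polynomial.eval_pow]
      ring
    calc ∫ x, gaussianPDFReal 0 1 x * (q.eval x)^2
        = ∫ x, c * ((q ^ 2 : ℝ[X]).eval x * rexp (-x ^ 2 / 2)) := by
          congr 1; funext x; exact e x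
      _ = c * Jg (q ^ 2) := by rw [integral_const_mul]; rfl
      _ = c * (D * J1) := by
          rw [hrep, Jg_sq (m + 1) a]
  -- numerator
  have hXq : X * q = ∑ k ∈ Finset.range (m + 2),
      C ((if k = 0 then 0 else a (k - 1)) + ((k : ℝ) + 1) * a (k + 1)) * Hr k := by
    rw [hrep]
    exact Hr_X_mul_sum (m + 1) a (fun n hn => ha0 n (by omega))
  have hnum : ∫ x, x^2 * (q.eval x)^2 ∂(gaussianReal 0 1) = c * (N * J1) := by
    rw [integral_sgauss]
    have e : ∀ x, gaussianPDFReal 0 1 x * (x^2 * (q.eval x)^2)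
        = c * (((X * q) ^ 2 : ℝ[X]).eval x * rexp (-x ^ 2 / 2)) := by
      intro x
      rw [pdf01, Polynomial.eval_pow, Polynomial.eval_mul, Polynomial.eval_X]
      ring
    calc ∫ x, gaussianPDFReal 0 1 x * (x^2 * (q.eval x)^2)
        = ∫ x, c * (((X * q) ^ 2 : ℝ[X]).eval x * rexp (-x ^ 2 / 2)) := by
          congr 1; funext x; exact e x
      _ = c * Jg ((X * q) ^ 2) := by rw [integral_const_mul]; rfl
      _ = c * (N * J1) := by rw [hXq, Jg_sq (m + 2)]
  -- positivity of D
  have hD : 0 < D := by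
    have hex : ∃ n, a n ≠ 0 := by
      by_contra h
      push_neg at h
      apply hq
      rw [hrep]
      refine Finset.sum_eq_zero fun n _ => ?_
      rw [h n, map_zero, zero_mul]
    obtain ⟨n0, hn0⟩ := hex
    have hn0m : n0 < m + 1 := by
      by_contra h
      exact hn0 (ha0 n0 (by omega))
    refine Finset.sum_pos' (fun i _ => by positivity) ⟨n0, Finset.mem_range.mpr hn0m, ?_⟩
    have h2 : 0 < a n0 ^ 2 := lt_of_le_of_ne (sq_nonneg _) (Ne.symm (pow_ne_zero 2 hn0))
    have h3 : (0:ℝ) < ((Nat.factorial n0 : ℕ) : ℝ) := by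
      exact_mod_cast Nat.factorial_pos n0
    exact mul_pos h2 h3
  -- conclude
  rw [hnum, hden]
  have key : N ≤ 6 * m * D := sum_bound m hm a ha0
  have e1 : c * (N * J1) = (c * J1) * N := by ring
  have e2 : c * (D * J1) = (c * J1) * D := by ring
  rw [e1, e2, mul_div_mul_left _ _ (ne_of_gt (mul_pos hc hJ1))]
  exact (div_le_iff₀ hD).mpr (by linarith)
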